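/- Let $R>0$, $0<\varepsilon<R$, and define $V(\eta)=\ln(R/(R-\varepsilon\eta))$ for $0\le \eta < R/\varepsilon$ and the weight $\zeta(\eta,\phi)=\big(1-((R-\varepsilon\eta)/R)^2\cos^2\phi\big)^{1/2}$. Then $\zeta$ satisfies the transport identity $\sin\phi\,\partial_\eta\zeta - \frac{\varepsilon}{R-\varepsilon\eta}\cos\phi\,\partial_\phi\zeta = 0$ at every point where $\zeta>0$. -/
import Mathlib


open Real

/-- The kinetic weight `ζ(η,φ) = (1 - ((R-εη)/R)² cos²φ)^{1/2}` satisfies the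
transport identity `sin φ ∂_η ζ - (ε/(R-εη)) cos φ ∂_φ ζ = 0` wherever `ζ > 0`. -/
theorem zeta_transport_identity
    (R ε : ℝ) (hR : 0 < R) (hε0 : 0 < ε) (hεR : ε < R)
    (ζ : ℝ → ℝ → ℝ)
    (hζ : ∀ η φ, ζ η φ = Real.sqrt (1 - ((R - ε * η) / R * Real.cos φ) ^ 2))
    (η φ : ℝ) (hη0 : 0 ≤ η) (hη : η < R / ε) (hpos : 0 < ζ η φ) :
    Real.sin φ * deriv (fun η' => ζ η' φ) η
      - ε / (R - ε * η) * Real.cos φ * deriv (fun φ' => ζ η φ') φ = 0 := by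
  have hRε : 0 < R - ε * η := by
    have := (lt_div_iff₀ hε0).mp hη
    nlinarith
  set s : ℝ := 1 - ((R - ε * η) / R * Real.cos φ) ^ 2 with hs_def
  have hs : 0 < s := by
    have h := hpos
    rw [hζ, ← hs_def] at h
    by_contra hns
    push_neg at hns
    rw [Real.sqrt_eq_zero' .. |>.mpr hns] at h
    exact lt_irrefl 0 h
  have hsne : s ≠ 0 := ne_of_gt hs
  have hsqrt_pos : 0 < Real.sqrt s := Real.sqrt_pos.mpr hs
  -- derivative in η
  have h1 : HasDerivAt (fun η' : ℝ => (R - ε * η') / R * Real.cos φ)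
      (-(ε / R) * Real.cos φ) η := by
    have : HasDerivAt (fun η' : ℝ => (R - ε * η') / R) (-ε / R) η := by
      simpa using (((hasDerivAt_id η).const_mul ε).const_sub R).div_const R
    simpa [neg_div] using this.mul_const (Real.cos φ)
  have h2 : HasDerivAt (fun η' : ℝ => 1 - ((R - ε * η') / R * Real.cos φ) ^ 2)
      (-(2 * ((R - ε * η) / R * Real.cos φ) * (-(ε / R) * Real.cos φ))) η := by
    simpa [mul_comm, mul_assoc, mul_left_comm] using (h1.pow 2).const_sub 1
  have h3 : HasDerivAt (fun η' : ℝ => ζ η' φ)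
      ((-(2 * ((R - ε * η) / R * Real.cos φ) * (-(ε / R) * Real.cos φ))) /
        (2 * ζ η φ)) η := by
    have := h2.sqrt hsne
    simp only [← hζ] at this
    simpa using this
  -- derivative in φ
  have g1 : HasDerivAt (fun φ' : ℝ => (R - ε * η) / R * Real.cos φ')
      ((R - ε * η) / R * (-Real.sin φ)) φ :=
    (Real.hasDerivAt_cos φ).const_mul _
  have g2 : HasDerivAt (fun φ' : ℝ => 1 - ((R - ε * η) / R * Real.cos φ') ^ 2)
      (-(2 * ((R - ε * η) / R * Real.cos φ) * ((R - ε * η) / R * (-Real.sin φ)))) φ := by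
    simpa [mul_comm, mul_assoc, mul_left_comm] using (g1.pow 2).const_sub 1
  have g3 : HasDerivAt (fun φ' : ℝ => ζ η φ')
      ((-(2 * ((R - ε * η) / R * Real.cos φ) * ((R - ε * η) / R * (-Real.sin φ)))) /
        (2 * ζ η φ)) φ := by
    have := g2.sqrt hsne
    simp only [← hζ] at this
    simpa using this
  rw [h3.deriv, g3.deriv]
  have hζne : ζ η φ ≠ 0 := ne_of_gt hpos
  field_simp
  ring
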